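/- For any poly-cyclic group G, there exist natural numbers p₁, …, p_r, each either a prime or 0, such that G embeds into the iterated wreath product Z_{p₁} ≀ Z_{p₂} ≀ ⋯ ≀ Z_{p_r}, where Z_0 := Z (the infinite cyclic group) and Z_p is cyclic of order p for p prime. -/

import Mathlib

/-! If `N ⊴ G` and `N` embeds in `H`, then for a section `σ` of `π : G → G/N` the
Kaloujnine–Krasner map `g ↦ (x ↦ σ(x)⁻¹ g σ(π(g)⁻¹ x), π g)` embeds `G` in `H ≀ (G/N)`.
Refine the subnormal series so that every factor is `ℤ` or cyclic of prime order and apply this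
from the bottom of the series up; the trivial group at the start is absorbed, since
`1 ≀ B ≅ B`. -/

def wreathAct (H G : Type*) [Group H] [Group G] : G →* MulAut (G → H) where
  toFun g :=
    { toFun := fun F x => F (g⁻¹ * x)
      invFun := fun F x => F (g * x)
      left_inv := fun F => by funext x; simp [mul_assoc]
      right_inv := fun F => by funext x; simp [mul_assoc]
      map_mul' := fun F₁ F₂ => rfl }
  map_one' := by ext F x; simp
  map_mul' := fun g₁ g₂ => by ext F x; simp [mul_assoc]

/-- The unrestricted wreath product `H ≀ G = Hᴳ ⋊ G`. -/
abbrev Wreath (H G : Type*) [Group H] [Group G] := SemidirectProduct (G → H) G (wreathAct H G)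


/-- A group bundled with its group structure. -/
structure GroupBundle : Type 1 where
  carrier : Type
  [str : Group carrier]

attribute [instance] GroupBundle.str

/-- `iterWreathFrom W [A₁, …, Aₖ] = ((W ≀ A₁) ≀ A₂) ≀ ⋯ ≀ Aₖ` (left-nested). -/
def iterWreathFrom : GroupBundle → List GroupBundle → GroupBundle
  | W, [] => W
  | W, A :: rest => iterWreathFrom ⟨Wreath W.carrier A.carrier⟩ rest

/-- The left-nested iterated wreath product of a list of groups:
`[H₁, H₂, …, Hₖ] ↦ ((H₁ ≀ H₂) ≀ H₃) ≀ ⋯ ≀ Hₖ`, the trivial group for the empty list. -/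
def iterWreathList : List GroupBundle → GroupBundle
  | [] => ⟨PUnit⟩
  | A :: rest => iterWreathFrom A rest

/-- A group `G` is poly-cyclic if it admits a subnormal series with all successive
quotients cyclic. -/
def IsPolycyclic (G : Type) [Group G] : Prop :=
  ∃ (r : ℕ) (s : Fin (r + 1) → Subgroup G),
    s 0 = ⊤ ∧ s (Fin.last r) = ⊥ ∧
    ∀ i : Fin r, ∃ hn : ((s i.succ).subgroupOf (s i.castSucc)).Normal,
      letI := hn
      IsCyclic (↥(s i.castSucc) ⧸ (s i.succ).subgroupOf (s i.castSucc))

theorem exists_injective_wreath_iterWreathFrom (W B : GroupBundle) (l : List GroupBundle) :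
    ∃ f : Wreath (iterWreathFrom W l).carrier B.carrier →*
        (iterWreathFrom W (l ++ [B])).carrier, Function.Injective f := by
  induction l generalizing W with
  | nil => exact ⟨MonoidHom.id _, Function.injective_id⟩
  | cons A l ih => exact ih _

theorem exists_injective_wreath_iterWreathList (l : List GroupBundle) (B : GroupBundle) :
    ∃ f : Wreath (iterWreathList l).carrier B.carrier →* (iterWreathList (l ++ [B])).carrier,
      Function.Injective f := by
  cases l with
  | nil =>
    exact ⟨SemidirectProduct.rightHom, fun x y h =>
      SemidirectProduct.ext (funext fun _ => rfl) h⟩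
  | cons A l => exact exists_injective_wreath_iterWreathFrom A B l

section KaloujnineKrasner

variable {G H Q : Type*} [Group G] [Group H] [Group Q] {π : G →* Q}
  (hπ : Function.Surjective π)

noncomputable def kaloujnineKrasnerCocycle (g : G) (x : Q) : π.ker :=
  ⟨(Function.surjInv hπ x)⁻¹ * g * Function.surjInv hπ ((π g)⁻¹ * x), by
    simp [Function.surjInv_eq hπ]⟩

theorem kaloujnineKrasnerCocycle_one (x : Q) : kaloujnineKrasnerCocycle hπ 1 x = 1 := by
  ext
  simp [kaloujnineKrasnerCocycle]

theorem kaloujnineKrasnerCocycle_mul (g h : G) (x : Q) :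
    kaloujnineKrasnerCocycle hπ (g * h) x =
      kaloujnineKrasnerCocycle hπ g x * kaloujnineKrasnerCocycle hπ h ((π g)⁻¹ * x) := by
  ext
  simp only [kaloujnineKrasnerCocycle, Subgroup.coe_mul, map_mul, mul_inv_rev, mul_assoc]
  group

noncomputable def kaloujnineKrasner (e : π.ker →* H) : G →* Wreath H Q where
  toFun g := ⟨fun x => e (kaloujnineKrasnerCocycle hπ g x), π g⟩
  map_one' := by
    ext x
    · simp [kaloujnineKrasnerCocycle_one]
    · simp
  map_mul' g h := by
    ext x
    · simp [kaloujnineKrasnerCocycle_mul]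
      rfl
    · simp

theorem kaloujnineKrasner_injective {e : π.ker →* H} (he : Function.Injective e) :
    Function.Injective (kaloujnineKrasner hπ e) := by
  rw [injective_iff_map_eq_one]
  intro g hg
  have hπg : π g = 1 := congrArg SemidirectProduct.right hg
  have hcocycle : kaloujnineKrasnerCocycle hπ g 1 = 1 :=
    (injective_iff_map_eq_one e).mp he _ (congrFun (congrArg SemidirectProduct.left hg) 1)
  have hσ := congrArg Subtype.val hcocycle
  simp only [kaloujnineKrasnerCocycle, hπg, inv_one, one_mul, OneMemClass.coe_one] at hσ
  rwa [mul_assoc, inv_mul_eq_one, eq_comm, mul_eq_right] at hσ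

end KaloujnineKrasner

theorem Subgroup.exists_relIndex_prime_of_isCyclic_quotient {G : Type*} [Group G]
    (N : Subgroup G) [N.Normal] [IsCyclic (G ⧸ N)] (h0 : N.index ≠ 0) (h1 : N.index ≠ 1) :
    ∃ M : Subgroup G, M.Normal ∧ N ≤ M ∧ (N.relIndex M).Prime ∧ M.index < N.index := by
  have : Finite (G ⧸ N) := Nat.finite_of_card_ne_zero h0
  have hp : N.index.minFac.Prime := Nat.minFac_prime h1
  have : Fact N.index.minFac.Prime := ⟨hp⟩
  obtain ⟨g, hg⟩ := exists_prime_orderOf_dvd_card' _ N.index.minFac_dvd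
  set K := Subgroup.zpowers g
  set M := K.comap (QuotientGroup.mk' N)
  have hNM : N ≤ M := fun x hx => by
    simp [M, (QuotientGroup.eq_one_iff x).mpr hx, one_mem]
  have hMK : M.index = K.index := K.index_comap_of_surjective (QuotientGroup.mk'_surjective N)
  have hK : N.index.minFac * K.index = N.index := by
    rw [← hg, ← Nat.card_zpowers g]
    exact K.card_mul_index
  have hM : N.relIndex M * K.index = N.index := hMK ▸ Subgroup.relIndex_mul_index hNM
  have hKpos : 0 < K.index := Nat.pos_of_ne_zero fun h => h0 (by rw [← hK, h, mul_zero])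
  refine ⟨M, inferInstance, hNM, ?_, ?_⟩
  · rwa [Nat.eq_of_mul_eq_mul_right hKpos (hM.trans hK.symm)]
  · rw [hMK, ← hK]
    exact lt_mul_left hKpos hp.one_lt

def zmodBundle (n : ℕ) : GroupBundle := ⟨Multiplicative (ZMod n)⟩

def EmbedsInCyclicWreathTower (G : Type) [Group G] : Prop :=
  ∃ q : List ℕ, (∀ n ∈ q, n.Prime ∨ n = 0) ∧
    ∃ f : G →* (iterWreathList (q.map zmodBundle)).carrier, Function.Injective f

namespace EmbedsInCyclicWreathTower

variable {G H : Type} [Group G] [Group H]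

theorem of_subsingleton [Subsingleton G] : EmbedsInCyclicWreathTower G :=
  ⟨[], by simp, 1, fun x y _ => Subsingleton.elim x y⟩

theorem of_injective (f : G →* H) (hf : Function.Injective f)
    (h : EmbedsInCyclicWreathTower H) : EmbedsInCyclicWreathTower G := by
  obtain ⟨q, hq, e, he⟩ := h
  exact ⟨q, hq, e.comp f, he.comp hf⟩

theorem of_mulEquiv (e : G ≃* H) (h : EmbedsInCyclicWreathTower H) :
    EmbedsInCyclicWreathTower G :=
  of_injective e.toMonoidHom e.injective h

theorem of_isCyclic_quotient_of_prime_or_zero {N : Subgroup G} [N.Normal]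
    [hc : IsCyclic (G ⧸ N)] (hN : N.index.Prime ∨ N.index = 0) (h : EmbedsInCyclicWreathTower N) :
    EmbedsInCyclicWreathTower G := by
  obtain ⟨q, hq, e, he⟩ := h
  -- `ZMod 0 = ℤ`, so this also covers an infinite quotient, where `N.index = 0`.
  let π : G →* Multiplicative (ZMod N.index) :=
    (zmodCyclicMulEquiv hc).symm.toMonoidHom.comp (QuotientGroup.mk' N)
  have hπ : Function.Surjective π :=
    (zmodCyclicMulEquiv hc).symm.surjective.comp (QuotientGroup.mk'_surjective N)
  have hker : π.ker = N := by
    ext g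
    exact (map_eq_one_iff _ (zmodCyclicMulEquiv hc).symm.injective).trans
      (QuotientGroup.eq_one_iff g)
  let eker := e.comp (MulEquiv.subgroupCongr hker).toMonoidHom
  have heker : Function.Injective eker := he.comp (MulEquiv.subgroupCongr hker).injective
  obtain ⟨w, hw⟩ :=
    exists_injective_wreath_iterWreathList (q.map zmodBundle) (zmodBundle N.index)
  refine ⟨q ++ [N.index], ?_, ?_⟩
  · simpa [or_imp, forall_and] using ⟨hq, hN⟩
  · rw [List.map_append]
    exact ⟨w.comp (kaloujnineKrasner hπ eker), hw.comp (kaloujnineKrasner_injective hπ heker)⟩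

/-- A finite cyclic quotient is split into steps of prime order: pass to a subgroup `M ≥ N` with
`M / N` of prime order and recurse on the index of `M`. -/
theorem of_isCyclic_quotient {N : Subgroup G} [N.Normal] [IsCyclic (G ⧸ N)]
    (h : EmbedsInCyclicWreathTower N) : EmbedsInCyclicWreathTower G := by
  induction hn : N.index using Nat.strong_induction_on generalizing N with
  | _ n ih =>
  subst hn
  by_cases h1 : N.index = 1
  · rw [Subgroup.index_eq_one] at h1
    subst h1
    exact of_mulEquiv Subgroup.topEquiv.symm h
  by_cases h0 : N.index = 0
  · exact of_isCyclic_quotient_of_prime_or_zero (Or.inr h0) h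
  obtain ⟨M, hM, hNM, hp, hlt⟩ := N.exists_relIndex_prime_of_isCyclic_quotient h0 h1
  have : IsCyclic (G ⧸ M) :=
    isCyclic_of_surjective (QuotientGroup.map N M (MonoidHom.id G) hNM)
      (QuotientGroup.map_surjective_of_surjective N M (MonoidHom.id G)
        QuotientGroup.mk_surjective hNM)
  have : Fact (N.relIndex M).Prime := ⟨hp⟩
  have : IsCyclic (M ⧸ N.subgroupOf M) := isCyclic_of_prime_card (p := N.relIndex M) rfl
  exact ih _ hlt (of_isCyclic_quotient_of_prime_or_zero (Or.inl hp)
    (of_mulEquiv (Subgroup.subgroupOfEquivOfLe hNM) h)) rfl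

end EmbedsInCyclicWreathTower

theorem IsPolycyclic.embedsInCyclicWreathTower {G : Type} [Group G] (hG : IsPolycyclic G) :
    EmbedsInCyclicWreathTower G := by
  obtain ⟨r, s, h0, hlast, hstep⟩ := hG
  have hseries : ∀ i, EmbedsInCyclicWreathTower (s i) := by
    refine Fin.reverseInduction ?_ fun i hi => ?_
    · rw [hlast]
      exact .of_subsingleton
    · obtain ⟨_, _⟩ := hstep i
      let ι : (s i.succ).subgroupOf (s i.castSucc) →* s i.succ :=
        ((s i.castSucc).subtype.comp (Subgroup.subtype _)).codRestrict _ fun x => x.2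
      have hι : Function.Injective ι := (MonoidHom.injective_codRestrict _ _ _).mpr
        (Subtype.val_injective.comp Subtype.val_injective)
      exact .of_isCyclic_quotient (.of_injective ι hι hi)
  exact .of_mulEquiv Subgroup.topEquiv.symm (h0 ▸ hseries 0)

/-- For any poly-cyclic group `G` there exist natural numbers `p₁, …, p_r`, each prime
or `0`, such that `G` embeds into the left-nested iterated wreath product
`Z_{p₁} ≀ Z_{p₂} ≀ ⋯ ≀ Z_{p_r}`, where `Z_0 = ZMod 0 = ℤ` is infinite cyclic and
`Z_p = ZMod p` is cyclic of order `p` for `p` prime. -/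
theorem stmt12 (G : Type) [Group G] (hpc : IsPolycyclic G) :
    ∃ (r : ℕ) (p : Fin r → ℕ), (∀ i, (p i).Prime ∨ p i = 0) ∧
      ∃ f : G →*
          (iterWreathList
            (List.ofFn fun i : Fin r =>
              (⟨Multiplicative (ZMod (p i))⟩ : GroupBundle))).carrier,
        Function.Injective f := by
  obtain ⟨q, hq, f, hf⟩ := hpc.embedsInCyclicWreathTower
  refine ⟨q.length, fun i => q[(i : ℕ)], fun i => hq _ (List.getElem_mem _), ?_⟩
  have hlist : (List.ofFn fun i : Fin q.length =>
      (⟨Multiplicative (ZMod q[(i : ℕ)])⟩ : GroupBundle)) = q.map zmodBundle :=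
    List.ofFn_getElem_eq_map q zmodBundle
  rw [hlist]
  exact ⟨f, hf⟩
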